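/- arXiv:2505.05795 — 3 statements merged into one kernel-verified Lean document; each statement's English description precedes it below -/
import Mathlib

section
/- (Theorem 2, per-agent form) Let n ≥ 1 and let r₁, …, rₙ ∈ ℝ³ be nominal positions with centroid r_c = (1/n) Σᵢ rᵢ. Let ζ ∈ ℝ³ be a unit vector and for each ordered pair (i, j) let w_{ij} = a_{ij} I₃ + b_{ij} ζζᵀ + c_{ij} ζ^× be weight matrices satisfying, for every agent i, Σ_{j ∈ 𝒩ᵢ} w_{ij}(r_j − r_i) = 0, where 𝒩ᵢ is the neighbor set of i. For any T ∈ ℝ³, k ∈ ℝ, and θ ∈ ℝ, define the target positions p*ᵢ = (r_c + T) + k R_ζ (rᵢ − r_c), where R_ζ = I₃ + (sin θ) ζ^× + (1 − cos θ)(ζ^×)². Then for every agent i, Σ_{j ∈ 𝒩ᵢ} w_{ij}(p*_j − p*_i) = 0. -/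
open Matrix

/-- The skew-symmetric cross-product matrix of a vector in R^3. -/
def skewMat (ζ : Fin 3 → ℝ) : Matrix (Fin 3) (Fin 3) ℝ :=
  !![0, -ζ 2, ζ 1;
     ζ 2, 0, -ζ 0;
     -ζ 1, ζ 0, 0]

/-- The outer-product matrix of a vector in R^3. -/
def outerMat (ζ : Fin 3 → ℝ) : Matrix (Fin 3) (Fin 3) ℝ :=
  Matrix.vecMulVec ζ ζ

/-- The Rodrigues rotation matrix by angle θ about the axis ζ. -/
noncomputable def rodrigues (ζ : Fin 3 → ℝ) (θ : ℝ) : Matrix (Fin 3) (Fin 3) ℝ :=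
  1 + Real.sin θ • skewMat ζ + (1 - Real.cos θ) • (skewMat ζ) ^ 2

/-!
Since `ζζᵀ = (ζ^×)² + (ζ ⬝ ζ) I`, every augmented-Laplacian weight and the Rodrigues matrix
`R_ζ` are polynomials in `ζ^×`, so they commute. The target positions differ by
`p*_j - p*_i = k R_ζ (r_j - r_i)`, hence `Σ_j w_ij (p*_j - p*_i) = k R_ζ Σ_j w_ij (r_j - r_i) = 0`.
-/

section Commuting

variable {ι m R : Type*} [Fintype m] [CommRing R]

theorem Matrix.sum_mulVec_mulVec_eq_zero_of_commute (s : Finset ι) (w : ι → Matrix m m R)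
    (A : Matrix m m R) (hA : ∀ j ∈ s, Commute (w j) A) (v : ι → m → R)
    (hv : ∑ j ∈ s, w j *ᵥ v j = 0) : ∑ j ∈ s, w j *ᵥ (A *ᵥ v j) = 0 := by
  calc ∑ j ∈ s, w j *ᵥ (A *ᵥ v j) = ∑ j ∈ s, A *ᵥ (w j *ᵥ v j) := by
        refine Finset.sum_congr rfl fun j hj => ?_
        rw [mulVec_mulVec, mulVec_mulVec, (hA j hj).eq]
    _ = 0 := by rw [← mulVec_sum, hv, mulVec_zero]

theorem Matrix.add_smul_mulVec_sub_sub (q c x y : m → R) (k : R) (A : Matrix m m R) :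
    (q + k • A *ᵥ (x - c)) - (q + k • A *ᵥ (y - c)) = (k • A) *ᵥ (x - y) := by
  rw [smul_mulVec, mulVec_sub, mulVec_sub, mulVec_sub, smul_sub, smul_sub, smul_sub]
  abel

end Commuting

section CrossProductMatrix

variable (ζ : Fin 3 → ℝ)

theorem skewMat_sq : skewMat ζ ^ 2 = outerMat ζ - (ζ ⬝ᵥ ζ) • 1 := by
  ext i j
  fin_cases i <;> fin_cases j <;>
    simp [skewMat, outerMat, vecMulVec_apply, sq, Matrix.mul_apply, Fin.sum_univ_three, dotProduct] <;> ring

theorem commute_outerMat_skewMat : Commute (outerMat ζ) (skewMat ζ) := by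
  rw [eq_add_of_sub_eq' (skewMat_sq ζ).symm]
  exact ((Commute.one_left _).smul_left _).add_left ((Commute.refl _).pow_left 2)

theorem commute_rodrigues_of_commute_skewMat {M : Matrix (Fin 3) (Fin 3) ℝ}
    (h : Commute M (skewMat ζ)) (θ : ℝ) : Commute M (rodrigues ζ θ) :=
  ((Commute.one_right M).add_right (h.smul_right _)).add_right ((h.pow_right 2).smul_right _)

theorem commute_weight_rodrigues (a b c θ : ℝ) :
    Commute (a • (1 : Matrix (Fin 3) (Fin 3) ℝ) + b • outerMat ζ + c • skewMat ζ)
      (rodrigues ζ θ) :=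
  commute_rodrigues_of_commute_skewMat ζ
    ((((Commute.one_left _).smul_left a).add_left
      ((commute_outerMat_skewMat ζ).smul_left b)).add_left ((Commute.refl _).smul_left c)) θ

end CrossProductMatrix

theorem target_formation_similar_general
    (n : ℕ) (r : Fin n → Fin 3 → ℝ)
    (ζ : Fin 3 → ℝ)
    (N : Fin n → Finset (Fin n))
    (a b c : Fin n → Fin n → ℝ)
    (w : Fin n → Fin n → Matrix (Fin 3) (Fin 3) ℝ)
    (hw : ∀ i j, w i j =
      a i j • (1 : Matrix (Fin 3) (Fin 3) ℝ) + b i j • outerMat ζ + c i j • skewMat ζ)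
    (hconstraint : ∀ i, ∑ j ∈ N i, (w i j) *ᵥ (r j - r i) = 0)
    (T : Fin 3 → ℝ) (k θ : ℝ)
    (rc : Fin 3 → ℝ)
    (p : Fin n → Fin 3 → ℝ)
    (hp : ∀ i, p i = (rc + T) + k • (rodrigues ζ θ *ᵥ (r i - rc))) :
    ∀ i, ∑ j ∈ N i, (w i j) *ᵥ (p j - p i) = 0 := by
  intro i
  have hdiff : ∀ j, p j - p i = (k • rodrigues ζ θ) *ᵥ (r j - r i) := fun j => by
    rw [hp, hp, add_smul_mulVec_sub_sub]
  simp only [hdiff]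
  refine sum_mulVec_mulVec_eq_zero_of_commute _ _ _ (fun j _ => ?_) _ (hconstraint i)
  rw [hw]
  exact (commute_weight_rodrigues ζ _ _ _ θ).smul_right k

/-- Theorem 2 (per-agent form): if augmented-Laplacian weights annihilate the
relative nominal positions, they also annihilate the relative target positions
obtained by translation, uniform scaling, and rotation about the unit axis ζ
applied about the centroid. -/
theorem target_formation_similar
    (n : ℕ) (hn : 1 ≤ n) (r : Fin n → Fin 3 → ℝ)
    (ζ : Fin 3 → ℝ) (hζ : ζ ⬝ᵥ ζ = 1)
    (N : Fin n → Finset (Fin n))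
    (a b c : Fin n → Fin n → ℝ)
    (w : Fin n → Fin n → Matrix (Fin 3) (Fin 3) ℝ)
    (hw : ∀ i j, w i j =
      a i j • (1 : Matrix (Fin 3) (Fin 3) ℝ) + b i j • outerMat ζ + c i j • skewMat ζ)
    (hconstraint : ∀ i, ∑ j ∈ N i, (w i j) *ᵥ (r j - r i) = 0)
    (T : Fin 3 → ℝ) (k θ : ℝ)
    (rc : Fin 3 → ℝ) (hrc : rc = (n : ℝ)⁻¹ • ∑ i, r i)
    (p : Fin n → Fin 3 → ℝ)
    (hp : ∀ i, p i = (rc + T) + k • (rodrigues ζ θ *ᵥ (r i - rc))) :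
    ∀ i, ∑ j ∈ N i, (w i j) *ᵥ (p j - p i) = 0 :=
  target_formation_similar_general n r ζ N a b c w hw hconstraint T k θ rc p hp
end

section
/- (Lemma 2) Let W_ff be an invertible real m × m matrix, W_fl a real m × k matrix, α > 0, and let p_f : ℝ → ℝ^m and p_l : ℝ → ℝ^k be differentiable trajectories satisfying W_ff p_f′(t) + W_fl p_l′(t) = −α (W_ff p_f(t) + W_fl p_l(t)) for all t ≥ 0. Then the tracking error e_f(t) = p_f(t) + W_ff⁻¹ W_fl p_l(t) satisfies e_f(t) = e^{−α t} e_f(0) for all t ≥ 0, and consequently p_f(t) + W_ff⁻¹ W_fl p_l(t) → 0 as t → ∞. -/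
open Matrix Filter

/-! The protocol says exactly that `W_ff` applied to `e_f' + α e_f` vanishes, so inverting `W_ff`
turns it into the scalar linear ODE `e_f' = -α e_f` on `[0, ∞)`. Its solutions are
`e^{-α t} e_f(0)`, because `e^{α t} e_f(t)` has zero derivative. -/

theorem HasDerivAt.matrix_mulVec {𝕜 : Type*} [NontriviallyNormedField 𝕜] [CompleteSpace 𝕜]
    {m n : Type*} [Fintype m] [Fintype n] (A : Matrix m n 𝕜) {f : 𝕜 → n → 𝕜} {f' : n → 𝕜} {t : 𝕜}
    (hf : HasDerivAt f f' t) : HasDerivAt (fun s => A *ᵥ f s) (A *ᵥ f') t :=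
  (Matrix.mulVecLin A).toContinuousLinearMap.hasFDerivAt.comp_hasDerivAt t hf

theorem eq_exp_mul_smul_of_hasDerivAt {E : Type*} [NormedAddCommGroup E] [NormedSpace ℝ E]
    {f : ℝ → E} {c : ℝ} (hf : ∀ t, 0 ≤ t → HasDerivAt f (c • f t) t) {t : ℝ} (ht : 0 ≤ t) :
    f t = Real.exp (c * t) • f 0 := by
  set g : ℝ → E := fun s => Real.exp (-c * s) • f s
  have hg : ∀ s, 0 ≤ s → HasDerivAt g 0 s := by
    intro s hs
    have hexp : HasDerivAt (fun s => Real.exp (-c * s)) (Real.exp (-c * s) * -c) s :=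
      ((hasDerivAt_id s).const_mul (-c)).exp.congr_deriv (by simp)
    refine (hexp.smul (hf s hs)).congr_deriv ?_
    rw [smul_smul, ← add_smul, ← mul_add, add_neg_cancel, mul_zero, zero_smul]
  have hconst : g t = g 0 :=
    constant_of_has_deriv_right_zero
      (fun s hs => (hg s hs.1).continuousAt.continuousWithinAt)
      (fun s hs => (hg s hs.1).hasDerivWithinAt) t ⟨ht, le_rfl⟩
  calc f t = Real.exp (c * t) • g t := by
        rw [smul_smul, ← Real.exp_add, neg_mul, add_neg_cancel, Real.exp_zero, one_smul]
    _ = Real.exp (c * t) • f 0 := by rw [hconst]; simp [g]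

theorem tendsto_exp_mul_smul_atTop_zero {E : Type*} [NormedAddCommGroup E] [NormedSpace ℝ E]
    {c : ℝ} (hc : c < 0) (v : E) :
    Tendsto (fun t => Real.exp (c * t) • v) atTop (nhds 0) := by
  simpa using (Real.tendsto_exp_atBot.comp (tendsto_id.const_mul_atTop_of_neg hc)).smul_const v

theorem add_inv_mul_mulVec_eq_inv_mulVec {m k : Type*} [Fintype m] [DecidableEq m] [Fintype k]
    {R : Type*} [CommRing R] {A : Matrix m m R} (hA : IsUnit A.det) (B : Matrix m k R)
    (x : m → R) (y : k → R) : x + (A⁻¹ * B) *ᵥ y = A⁻¹ *ᵥ (A *ᵥ x + B *ᵥ y) := by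
  rw [mulVec_add, mulVec_mulVec, mulVec_mulVec, nonsing_inv_mul A hA, one_mulVec]

/-- Lemma 2: under the follower control protocol, the tracking error decays
exponentially, `e_f(t) = e^{-α t} e_f(0)` for `t ≥ 0`, and hence tends to 0. -/
theorem follower_error_converges
    (m k : ℕ)
    (Wff : Matrix (Fin m) (Fin m) ℝ) (hWff : IsUnit Wff.det)
    (Wfl : Matrix (Fin m) (Fin k) ℝ)
    (α : ℝ) (hα : 0 < α)
    (pf : ℝ → Fin m → ℝ) (pl : ℝ → Fin k → ℝ)
    (hpf : Differentiable ℝ pf) (hpl : Differentiable ℝ pl)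
    (hprotocol : ∀ t : ℝ, 0 ≤ t →
      Wff *ᵥ deriv pf t + Wfl *ᵥ deriv pl t
        = -α • (Wff *ᵥ pf t + Wfl *ᵥ pl t)) :
    (∀ t : ℝ, 0 ≤ t →
      pf t + (Wff⁻¹ * Wfl) *ᵥ pl t
        = Real.exp (-α * t) • (pf 0 + (Wff⁻¹ * Wfl) *ᵥ pl 0)) ∧
    Tendsto (fun t => pf t + (Wff⁻¹ * Wfl) *ᵥ pl t) atTop (nhds 0) := by
  set e := fun t => pf t + (Wff⁻¹ * Wfl) *ᵥ pl t
  have he : ∀ t, 0 ≤ t → HasDerivAt e (-α • e t) t := by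
    intro t ht
    have hderiv := (hpf t).hasDerivAt.add ((hpl t).hasDerivAt.matrix_mulVec (Wff⁻¹ * Wfl))
    rwa [add_inv_mul_mulVec_eq_inv_mulVec hWff, hprotocol t ht, mulVec_smul,
      ← add_inv_mul_mulVec_eq_inv_mulVec hWff] at hderiv
  have hexp : ∀ t, 0 ≤ t → e t = Real.exp (-α * t) • e 0 :=
    fun t ht => eq_exp_mul_smul_of_hasDerivAt he ht
  refine ⟨hexp, (tendsto_exp_mul_smul_atTop_zero (neg_lt_zero.mpr hα) (e 0)).congr' ?_⟩
  filter_upwards [eventually_ge_atTop 0] with t ht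
  exact (hexp t ht).symm
end

section
/- (Theorem 4) Let d, n_f, n_l ≥ 1, n = n_f + n_l, and let W ∈ ℝ^{nd × nd} be block-partitioned as W = [[W_ff, W_fl], [W_lf, W_ll]] with invertible follower–follower block W_ff ∈ ℝ^{n_f d × n_f d}. Suppose the original configuration p = (p_f, p_l) ∈ ℝ^{nd} satisfies W p = 0. A new agent joins at position p_add ∈ ℝ^d, giving the extended configuration p′ = (p_add, p′_o) ∈ ℝ^{(n+1)d} with p′_o = (p′_{of}, p′_{ol}), and the reconstructed constraint matrix is W′ = W_ex + ΔW, where W_ex = [[0_{d×d}, 0_{d×nd}], [0_{nd×d}, W]]. If W′ p′ = 0, ΔW p′ = 0, and the leaders' positions are unchanged (p′_{ol} = p_l), then the entire original configuration is unchanged: p′_o = p (in particular p′_{of} = p_f = −W_ff⁻¹ W_fl p_l). -/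
/-! Subtracting `ΔW p' = 0` from `W' p' = 0` leaves `Wex p' = 0`, i.e. `W p'_o = 0`. With the
leaders fixed, both `p_f` and `p'_of` then solve the follower equation `W_ff x = -W_fl p_l`, whose
solution is unique because `W_ff` is invertible. -/

open Matrix

namespace Matrix

variable {l m n o R : Type*}

theorem fromBlocks_zero_zero_zero_mulVec_sum_elim [Fintype l] [Fintype m]
    [NonUnitalNonAssocSemiring R] (D : Matrix o m R) (x : l → R) (y : m → R) :
    fromBlocks (0 : Matrix n l R) 0 0 D *ᵥ Sum.elim x y = Sum.elim (0 : n → R) (D *ᵥ y) := by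
  simp [fromBlocks_mulVec, Function.comp_def]

theorem eq_neg_inv_mul_mulVec_of_fromBlocks_mulVec_eq_zero [Fintype l] [Fintype m]
    [DecidableEq l] [CommRing R] {A : Matrix l l R} (hA : IsUnit A.det) (B : Matrix l m R)
    (C : Matrix o l R) (D : Matrix o m R) {x : l → R} {y : m → R}
    (h : fromBlocks A B C D *ᵥ Sum.elim x y = 0) :
    x = -((A⁻¹ * B) *ᵥ y) := by
  have hfollow : A *ᵥ x = -(B *ᵥ y) := by
    rw [fromBlocks_mulVec, ← Sum.elim_zero_zero, Sum.elim_eq_iff] at h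
    exact eq_neg_of_add_eq_zero_left h.1
  calc x = (A⁻¹ * A) *ᵥ x := by rw [nonsing_inv_mul A hA, one_mulVec]
    _ = -((A⁻¹ * B) *ᵥ y) := by rw [← mulVec_mulVec, hfollow, mulVec_neg, mulVec_mulVec]

end Matrix

theorem dynamic_agent_reconfiguration_general
    (d nf nl : ℕ)
    (Wff : Matrix (Fin (nf * d)) (Fin (nf * d)) ℝ)
    (Wfl : Matrix (Fin (nf * d)) (Fin (nl * d)) ℝ)
    (Wlf : Matrix (Fin (nl * d)) (Fin (nf * d)) ℝ)
    (Wll : Matrix (Fin (nl * d)) (Fin (nl * d)) ℝ)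
    (hWff : IsUnit Wff.det)
    (W : Matrix (Fin (nf * d) ⊕ Fin (nl * d)) (Fin (nf * d) ⊕ Fin (nl * d)) ℝ)
    (hW : W = Matrix.fromBlocks Wff Wfl Wlf Wll)
    (pf : Fin (nf * d) → ℝ) (pl : Fin (nl * d) → ℝ)
    (hWp : W *ᵥ Sum.elim pf pl = 0)
    (padd : Fin d → ℝ)
    (pof : Fin (nf * d) → ℝ) (pol : Fin (nl * d) → ℝ)
    (Wex ΔW W' : Matrix (Fin d ⊕ (Fin (nf * d) ⊕ Fin (nl * d)))
      (Fin d ⊕ (Fin (nf * d) ⊕ Fin (nl * d))) ℝ)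
    (hWex : Wex = Matrix.fromBlocks 0 0 0 W)
    (hW' : W' = Wex + ΔW)
    (hW'p' : W' *ᵥ Sum.elim padd (Sum.elim pof pol) = 0)
    (hΔWp' : ΔW *ᵥ Sum.elim padd (Sum.elim pof pol) = 0)
    (hleaders : pol = pl) :
    Sum.elim pof pol = Sum.elim pf pl ∧ pof = pf ∧
      pf = -((Wff⁻¹ * Wfl) *ᵥ pl) := by
  subst hW' hWex hleaders
  have hWp' : W *ᵥ Sum.elim pof pol = 0 := by
    rw [add_mulVec, hΔWp', add_zero, fromBlocks_zero_zero_zero_mulVec_sum_elim,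
      ← Sum.elim_zero_zero, Sum.elim_eq_iff] at hW'p'
    exact hW'p'.2
  subst hW
  have hpf := eq_neg_inv_mul_mulVec_of_fromBlocks_mulVec_eq_zero hWff _ _ _ hWp
  have hpof := eq_neg_inv_mul_mulVec_of_fromBlocks_mulVec_eq_zero hWff _ _ _ hWp'
  have hfollowers : pof = pf := hpof.trans hpf.symm
  exact ⟨by rw [hfollowers], hfollowers, hpf⟩

/-- Theorem 4 (dynamic agent reconfiguration): if a new agent joins the
formation, the constraint matrix is extended by zero-padding to `Wex` and
corrected by `ΔW`, and the new constraint matrix `W' = Wex + ΔW` annihilates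
the extended configuration while `ΔW` also annihilates it, then provided the
leaders' positions are unchanged, the entire original configuration is
unchanged (in particular the original followers stay at
`p_f = -Wff⁻¹ Wfl p_l`). -/
theorem dynamic_agent_reconfiguration
    (d nf nl : ℕ) (hd : 1 ≤ d) (hnf : 1 ≤ nf) (hnl : 1 ≤ nl)
    (Wff : Matrix (Fin (nf * d)) (Fin (nf * d)) ℝ)
    (Wfl : Matrix (Fin (nf * d)) (Fin (nl * d)) ℝ)
    (Wlf : Matrix (Fin (nl * d)) (Fin (nf * d)) ℝ)
    (Wll : Matrix (Fin (nl * d)) (Fin (nl * d)) ℝ)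
    (hWff : IsUnit Wff.det)
    (W : Matrix (Fin (nf * d) ⊕ Fin (nl * d)) (Fin (nf * d) ⊕ Fin (nl * d)) ℝ)
    (hW : W = Matrix.fromBlocks Wff Wfl Wlf Wll)
    (pf : Fin (nf * d) → ℝ) (pl : Fin (nl * d) → ℝ)
    (hWp : W *ᵥ Sum.elim pf pl = 0)
    (padd : Fin d → ℝ)
    (pof : Fin (nf * d) → ℝ) (pol : Fin (nl * d) → ℝ)
    (Wex ΔW W' : Matrix (Fin d ⊕ (Fin (nf * d) ⊕ Fin (nl * d)))
      (Fin d ⊕ (Fin (nf * d) ⊕ Fin (nl * d))) ℝ)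
    (hWex : Wex = Matrix.fromBlocks 0 0 0 W)
    (hW' : W' = Wex + ΔW)
    (hW'p' : W' *ᵥ Sum.elim padd (Sum.elim pof pol) = 0)
    (hΔWp' : ΔW *ᵥ Sum.elim padd (Sum.elim pof pol) = 0)
    (hleaders : pol = pl) :
    Sum.elim pof pol = Sum.elim pf pl ∧ pof = pf ∧
      pf = -((Wff⁻¹ * Wfl) *ᵥ pl) :=
  dynamic_agent_reconfiguration_general d nf nl Wff Wfl Wlf Wll hWff W hW pf pl hWp padd pof pol Wex
    ΔW W' hWex hW' hW'p' hΔWp' hleaders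
end
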